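/- arXiv:2503.01598 — 4 statements merged into one kernel-verified Lean document; each statement's English description precedes it below -/
import Mathlib

section
/- For all x₁, x₂ ∈ [0,1], h_D(x₁, x₂) ≥ (x₁ - x₂)², where h_D(x₁,x₂) := 2·h_b((x₁+x₂)/2) - h_b(x₁) - h_b(x₂) and h_b is the binary entropy function. -/
noncomputable def hb (x : ℝ) : ℝ := -(x * Real.log x) - (1 - x) * Real.log (1 - x)

noncomputable def hD (x₁ x₂ : ℝ) : ℝ := 2 * hb ((x₁ + x₂) / 2) - hb x₁ - hb x₂

open Real Set

/-- Generic helper: continuous on `Icc a b`, derivative nonneg inside, then `f a ≤ f b`. -/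
lemma mono_help {f : ℝ → ℝ} {a b : ℝ} (hab : a ≤ b)
    (hc : ContinuousOn f (Icc a b))
    (hd : ∀ t ∈ Ioo a b, ∃ d, 0 ≤ d ∧ HasDerivAt f d t) : f a ≤ f b := by
  have hmono : MonotoneOn f (Icc a b) := by
    apply monotoneOn_of_deriv_nonneg (convex_Icc a b) hc
    · intro t ht
      rw [interior_Icc] at ht
      obtain ⟨d, _, hdd⟩ := hd t ht
      exact hdd.differentiableAt.differentiableWithinAt
    · intro t ht
      rw [interior_Icc] at ht
      obtain ⟨d, hd0, hdd⟩ := hd t ht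
      rw [hdd.deriv]; exact hd0
  exact hmono (left_mem_Icc.2 hab) (right_mem_Icc.2 hab) hab

lemma anti_help {f : ℝ → ℝ} {a b : ℝ} (hab : a ≤ b)
    (hc : ContinuousOn f (Icc a b))
    (hd : ∀ t ∈ Ioo a b, ∃ d, d ≤ 0 ∧ HasDerivAt f d t) : f b ≤ f a := by
  have hmono : AntitoneOn f (Icc a b) := by
    apply antitoneOn_of_deriv_nonpos (convex_Icc a b) hc
    · intro t ht
      rw [interior_Icc] at ht
      obtain ⟨d, _, hdd⟩ := hd t ht
      exact hdd.differentiableAt.differentiableWithinAt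
    · intro t ht
      rw [interior_Icc] at ht
      obtain ⟨d, hd0, hdd⟩ := hd t ht
      rw [hdd.deriv]; exact hd0
  exact hmono (left_mem_Icc.2 hab) (right_mem_Icc.2 hab) hab

lemma log_one_sub_le (q : ℝ) (hq0 : 0 ≤ q) (hq1 : q < 1) :
    2 * q ^ 2 ≤ -Real.log (1 - q) := by
  set f : ℝ → ℝ := fun t => -Real.log (1 - t) - 2 * t ^ 2 with hf
  have key : f 0 ≤ f q := by
    apply mono_help hq0
    · apply ContinuousOn.sub
      · apply ContinuousOn.neg
        intro t ht
        have h1t : (1:ℝ) - t ≠ 0 := by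
          rcases ht with ⟨_, ht2⟩; intro h; nlinarith
        exact ((Real.continuousAt_log h1t).comp (by fun_prop)).continuousWithinAt
      · fun_prop
    · intro t ht
      obtain ⟨ht0, htq⟩ := ht
      have ht1 : t < 1 := lt_of_lt_of_le htq hq1.le
      have h1t : (0:ℝ) < 1 - t := by linarith
      refine ⟨(1 - t)⁻¹ - 4 * t, ?_, ?_⟩
      · have heq : (1 - t)⁻¹ - 4 * t = (1 - 2 * t) ^ 2 / (1 - t) := by
          field_simp; ring
        rw [heq]; positivity
      · have hlog : HasDerivAt (fun t : ℝ => Real.log (1 - t)) (-(1 - t)⁻¹) t := by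
          have := (Real.hasDerivAt_log h1t.ne').comp t
            ((hasDerivAt_const t (1:ℝ)).sub (hasDerivAt_id t))
          exact this.congr_deriv (by ring)
        have hsq : HasDerivAt (fun t : ℝ => 2 * t ^ 2) (4 * t) t := by
          have := (hasDerivAt_pow 2 t).const_mul (2:ℝ)
          simpa using this.congr_deriv (by ring)
        exact (hlog.neg.sub hsq).congr_deriv (by ring)
  have h0 : f 0 = 0 := by simp [hf]
  have : f q = -Real.log (1 - q) - 2 * q ^ 2 := rfl
  linarith [key, h0.symm ▸ key]

lemma log_le' (q : ℝ) (hq0 : 0 < q) (hq1 : q ≤ 1) :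
    2 * (1 - q) ^ 2 ≤ -Real.log q := by
  have := log_one_sub_le (1 - q) (by linarith) (by linarith)
  simpa using this

/-- Binary Pinsker inequality. -/
lemma kl_ge (p q : ℝ) (hp : p ∈ Icc (0:ℝ) 1) (hq0 : 0 < q) (hq1 : q < 1) :
    2 * (p - q) ^ 2 ≤ -hb p - p * Real.log q - (1 - p) * Real.log (1 - q) := by
  obtain ⟨hp0, hp1⟩ := hp
  rcases eq_or_lt_of_le hp0 with h0 | hp0
  · -- p = 0
    subst h0
    have := log_one_sub_le q hq0.le hq1
    simp only [hb, zero_mul, neg_zero, sub_zero, Real.log_one, mul_zero, one_mul,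
      zero_sub, sub_self]
    nlinarith [this]
  rcases eq_or_lt_of_le hp1 with h1 | hp1
  · -- p = 1
    subst h1
    have := log_le' q hq0 hq1.le
    simp only [hb, Real.log_one, mul_one, sub_self, zero_mul, mul_zero, sub_zero]
    nlinarith [this]
  -- 0 < p < 1
  set g : ℝ → ℝ := fun t => -hb p - p * Real.log t - (1 - p) * Real.log (1 - t)
      - 2 * (p - t) ^ 2 with hg
  have hderiv : ∀ t ∈ Ioo (0:ℝ) 1, HasDerivAt g
      ((t - p) * (1 - 2 * t) ^ 2 / (t * (1 - t))) t := by
    intro t ht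
    obtain ⟨ht0, ht1⟩ := ht
    have h1t : (0:ℝ) < 1 - t := by linarith
    have h1 : HasDerivAt (fun t : ℝ => p * Real.log t) (p * t⁻¹) t :=
      (Real.hasDerivAt_log ht0.ne').const_mul p
    have h2 : HasDerivAt (fun t : ℝ => (1 - p) * Real.log (1 - t))
        ((1 - p) * (-(1 - t)⁻¹)) t := by
      have hlog : HasDerivAt (fun t : ℝ => Real.log (1 - t)) (-(1 - t)⁻¹) t := by
        have := (Real.hasDerivAt_log h1t.ne').comp t
          ((hasDerivAt_const t (1:ℝ)).sub (hasDerivAt_id t))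
        exact this.congr_deriv (by ring)
      exact hlog.const_mul (1 - p)
    have h3 : HasDerivAt (fun t : ℝ => 2 * (p - t) ^ 2) (-4 * (p - t)) t := by
      have hsub : HasDerivAt (fun t : ℝ => p - t) (-1) t := by
        exact ((hasDerivAt_const t p).sub (hasDerivAt_id t)).congr_deriv (by ring)
      have := (hsub.pow 2).const_mul (2:ℝ)
      simpa using this.congr_deriv (by ring)
    have := (((hasDerivAt_const t (-hb p)).sub h1).sub h2).sub h3
    apply this.congr_deriv
    field_simp
    ring
  have hgp : g p = 0 := by
    simp only [hg, hb]
    ring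
  rcases le_total p q with hpq | hpq
  · -- p ≤ q : g monotone on [p, q]
    have key : g p ≤ g q := by
      apply mono_help hpq
      · intro t ht
        obtain ⟨htp, htq⟩ := ht
        exact (hderiv t ⟨lt_of_lt_of_le hp0 htp, lt_of_le_of_lt htq hq1⟩
          ).differentiableAt.continuousAt.continuousWithinAt
      · intro t ht
        obtain ⟨htp, htq⟩ := ht
        have ht0 : 0 < t := lt_trans hp0 htp
        have ht1 : t < 1 := lt_trans htq hq1
        refine ⟨(t - p) * (1 - 2 * t) ^ 2 / (t * (1 - t)), ?_, hderiv t ⟨ht0, ht1⟩⟩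
        apply div_nonneg
        · nlinarith [sq_nonneg (1 - 2 * t)]
        · nlinarith
    rw [hgp] at key
    simp only [hg] at key
    linarith
  · -- q ≤ p : g antitone on [q, p]
    have key : g p ≤ g q := by
      apply anti_help hpq
      · intro t ht
        obtain ⟨htq, htp⟩ := ht
        exact (hderiv t ⟨lt_of_lt_of_le hq0 htq, lt_of_le_of_lt htp hp1⟩
          ).differentiableAt.continuousAt.continuousWithinAt
      · intro t ht
        obtain ⟨htq, htp⟩ := ht
        have ht0 : 0 < t := lt_trans hq0 htq
        have ht1 : t < 1 := lt_trans htp hp1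
        refine ⟨(t - p) * (1 - 2 * t) ^ 2 / (t * (1 - t)), ?_, hderiv t ⟨ht0, ht1⟩⟩
        apply div_nonpos_of_nonpos_of_nonneg
        · nlinarith [sq_nonneg (1 - 2 * t)]
        · nlinarith
    rw [hgp] at key
    simp only [hg] at key
    linarith

theorem hD_ge_sq_diff (x₁ x₂ : ℝ) (h₁ : x₁ ∈ Set.Icc (0:ℝ) 1)
    (h₂ : x₂ ∈ Set.Icc (0:ℝ) 1) :
    hD x₁ x₂ ≥ (x₁ - x₂) ^ 2 := by
  obtain ⟨h₁0, h₁1⟩ := h₁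
  obtain ⟨h₂0, h₂1⟩ := h₂
  set m : ℝ := (x₁ + x₂) / 2 with hm
  rcases eq_or_lt_of_le (show (0:ℝ) ≤ m by rw [hm]; linarith) with hm0 | hm0
  · -- m = 0, so x₁ = x₂ = 0
    have hx1 : x₁ = 0 := by rw [hm] at hm0; linarith
    have hx2 : x₂ = 0 := by rw [hm] at hm0; linarith
    subst hx1; subst hx2
    simp [hD, hb]
  rcases eq_or_lt_of_le (show m ≤ (1:ℝ) by rw [hm]; linarith) with hm1 | hm1
  · -- m = 1, so x₁ = x₂ = 1
    have hx1 : x₁ = 1 := by rw [hm] at hm1; linarith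
    have hx2 : x₂ = 1 := by rw [hm] at hm1; linarith
    subst hx1; subst hx2
    simp [hD, hb]
  -- 0 < m < 1
  have k1 := kl_ge x₁ m ⟨h₁0, h₁1⟩ hm0 hm1
  have k2 := kl_ge x₂ m ⟨h₂0, h₂1⟩ hm0 hm1
  have hsum : hD x₁ x₂ = (-hb x₁ - x₁ * Real.log m - (1 - x₁) * Real.log (1 - m))
      + (-hb x₂ - x₂ * Real.log m - (1 - x₂) * Real.log (1 - m)) := by
    have h2m : x₁ + x₂ = 2 * m := by rw [hm]; ring
    simp only [hD, ← hm, hb]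
    linear_combination (Real.log (1 - m) - Real.log m) * h2m
  have hdiff : 2 * (x₁ - m) ^ 2 + 2 * (x₂ - m) ^ 2 = (x₁ - x₂) ^ 2 := by
    rw [hm]; ring
  rw [ge_iff_le, ← hdiff, hsum]
  linarith
end

section
/- For fixed x₂ ∈ [0,1], the function x₁ ↦ h_D(x₁, x₂) is monotone increasing on the interval [x₂, 1]. -/
lemma hb_continuous : Continuous hb := by
  have h1 : Continuous fun x : ℝ => x * Real.log x := Real.continuous_mul_log
  have h2 : Continuous fun x : ℝ => (1 - x) * Real.log (1 - x) :=
    h1.comp (continuous_const.sub continuous_id)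
  exact (h1.neg).sub h2

lemma hb_hasDerivAt {x : ℝ} (h0 : 0 < x) (h1 : x < 1) :
    HasDerivAt hb (Real.log (1 - x) - Real.log x) x := by
  have ha : HasDerivAt (fun x : ℝ => x * Real.log x) (Real.log x + 1) x :=
    Real.hasDerivAt_mul_log h0.ne'
  have hinner : HasDerivAt (fun x : ℝ => 1 - x) (-1) x := by
    simpa using (hasDerivAt_id' x).const_sub (1:ℝ)
  have hb' : HasDerivAt (fun x : ℝ => (1 - x) * Real.log (1 - x))
      ((Real.log (1 - x) + 1) * (-1)) x :=
    (Real.hasDerivAt_mul_log (by linarith : (1:ℝ) - x ≠ 0)).comp x hinner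
  have := (ha.neg).sub hb'
  exact this.congr_deriv (by ring)

theorem hD_monotoneOn (x₂ : ℝ) (hx₂ : x₂ ∈ Set.Icc (0:ℝ) 1) :
    MonotoneOn (fun x₁ => hD x₁ x₂) (Set.Icc x₂ 1) := by
  obtain ⟨h0, h1⟩ := hx₂
  have key : ∀ t ∈ Set.Ioo x₂ 1, HasDerivAt (fun x₁ => hD x₁ x₂)
      ((Real.log (1 - (t + x₂) / 2) - Real.log ((t + x₂) / 2))
        - (Real.log (1 - t) - Real.log t)) t := by
    intro t ht
    obtain ⟨ht0, ht1⟩ := ht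
    have htpos : 0 < t := lt_of_le_of_lt h0 ht0
    have hm0 : 0 < (t + x₂) / 2 := by linarith
    have hm1 : (t + x₂) / 2 < 1 := by linarith
    have hmid : HasDerivAt (fun x₁ : ℝ => (x₁ + x₂) / 2) (1 / 2) t := by
      simpa using ((hasDerivAt_id t).add (hasDerivAt_const t x₂)).div_const 2
    have h2 : HasDerivAt (fun x₁ : ℝ => hb ((x₁ + x₂) / 2))
        ((Real.log (1 - (t + x₂) / 2) - Real.log ((t + x₂) / 2)) * (1 / 2)) t :=
      by have := (hb_hasDerivAt hm0 hm1).comp t hmid; exact this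
    have h3 := ((h2.const_mul 2).sub (hb_hasDerivAt htpos ht1)).sub
      (hasDerivAt_const t (hb x₂))
    exact h3.congr_deriv (by ring)
  apply monotoneOn_of_deriv_nonneg (convex_Icc x₂ 1)
  · exact ((continuous_const.mul (hb_continuous.comp (by continuity))).sub
      hb_continuous |>.sub continuous_const).continuousOn
  · intro t ht
    rw [interior_Icc] at ht
    exact (key t ht).differentiableAt.differentiableWithinAt
  · intro t ht
    rw [interior_Icc] at ht
    rw [(key t ht).deriv]
    obtain ⟨ht0, ht1⟩ := ht
    have htpos : 0 < t := lt_of_le_of_lt h0 ht0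
    have hm0 : 0 < (t + x₂) / 2 := by linarith
    have hml : (t + x₂) / 2 ≤ t := by linarith
    have e1 : Real.log ((t + x₂) / 2) ≤ Real.log t := Real.log_le_log hm0 hml
    have e2 : Real.log (1 - t) ≤ Real.log (1 - (t + x₂) / 2) :=
      Real.log_le_log (by linarith) (by linarith)
    linarith
end

section
/- The function h_D : [0,1]² → ℝ defined by h_D(x₁,x₂) = 2·h_b((x₁+x₂)/2) - h_b(x₁) - h_b(x₂) is jointly convex on [0,1]². -/
/-- The perspective-type function `a log(a/c)`, written without division. -/
noncomputable def G (a c : ℝ) : ℝ := a * Real.log a - a * Real.log c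

lemma Gsmul (t a c : ℝ) (ht : 0 ≤ t) (ha : 0 ≤ a) (hac : a ≤ c) :
    G (t * a) (t * c) = t * G a c := by
  unfold G
  rcases eq_or_lt_of_le ht with h | ht
  · rw [← h]; simp
  rcases eq_or_lt_of_le ha with h | ha
  · rw [← h]; simp
  have hc : 0 < c := lt_of_lt_of_le ha hac
  rw [Real.log_mul (ne_of_gt ht) (ne_of_gt ha), Real.log_mul (ne_of_gt ht) (ne_of_gt hc)]
  ring

/-- Two-term log-sum inequality. -/
lemma logsum (a b c d : ℝ) (ha : 0 ≤ a) (hb' : 0 ≤ b) (hac : a ≤ c) (hbd : b ≤ d) :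
    G (a + b) (c + d) ≤ G a c + G b d := by
  rcases eq_or_lt_of_le ha with h | hapos
  · -- a = 0
    rw [← h] at hac ⊢
    simp only [G, zero_add, zero_mul, sub_zero, zero_sub]
    rcases eq_or_lt_of_le hb' with h2 | hbpos
    · rw [← h2]; simp
    have hd : 0 < d := lt_of_lt_of_le hbpos hbd
    have : Real.log d ≤ Real.log (c + d) := Real.log_le_log hd (by linarith)
    nlinarith
  rcases eq_or_lt_of_le hb' with h | hbpos
  · -- b = 0
    rw [← h] at hbd ⊢
    simp only [G, add_zero, zero_mul, sub_zero, zero_sub]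
    have hc : 0 < c := lt_of_lt_of_le hapos hac
    have : Real.log c ≤ Real.log (c + d) := Real.log_le_log hc (by linarith)
    nlinarith
  · have hc : 0 < c := lt_of_lt_of_le hapos hac
    have hd : 0 < d := lt_of_lt_of_le hbpos hbd
    have hab : (0:ℝ) < a + b := by linarith
    have hcd : (0:ℝ) < c + d := by linarith
    have e1 : Real.log (c * (a + b) / (a * (c + d)))
        = Real.log c + Real.log (a + b) - Real.log a - Real.log (c + d) := by
      rw [Real.log_div (by positivity) (by positivity),
        Real.log_mul (ne_of_gt hc) (ne_of_gt hab),
        Real.log_mul (ne_of_gt hapos) (ne_of_gt hcd)]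
      ring
    have e2 : Real.log (d * (a + b) / (b * (c + d)))
        = Real.log d + Real.log (a + b) - Real.log b - Real.log (c + d) := by
      rw [Real.log_div (by positivity) (by positivity),
        Real.log_mul (ne_of_gt hd) (ne_of_gt hab),
        Real.log_mul (ne_of_gt hbpos) (ne_of_gt hcd)]
      ring
    have l1 := Real.log_le_sub_one_of_pos
      (show (0:ℝ) < c * (a + b) / (a * (c + d)) by positivity)
    have l2 := Real.log_le_sub_one_of_pos
      (show (0:ℝ) < d * (a + b) / (b * (c + d)) by positivity)
    rw [e1] at l1
    rw [e2] at l2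
    have m1 := mul_le_mul_of_nonneg_left l1 ha
    have m2 := mul_le_mul_of_nonneg_left l2 hb'
    have cancel : a * (c * (a + b) / (a * (c + d))) + b * (d * (a + b) / (b * (c + d)))
        = a + b := by
      field_simp
    unfold G
    nlinarith [m1, m2, cancel]

lemma hD_eq (x₁ x₂ : ℝ) : hD x₁ x₂ =
    G x₁ (x₁ + x₂) + G x₂ (x₁ + x₂) + G (1 - x₁) (2 - x₁ - x₂) + G (1 - x₂) (2 - x₁ - x₂)
      + 2 * Real.log 2 := by
  have key : ∀ s : ℝ, Real.log (s / 2) * s = Real.log s * s - Real.log 2 * s := by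
    intro s
    rcases eq_or_ne s 0 with h | h
    · simp [h]
    · rw [Real.log_div h two_ne_zero]; ring
  unfold hD hb G
  rw [show (1 : ℝ) - (x₁ + x₂) / 2 = (2 - x₁ - x₂) / 2 by ring]
  linear_combination (-key (x₁ + x₂) - key (2 - x₁ - x₂))

theorem hD_convexOn :
    ConvexOn ℝ (Set.Icc (0:ℝ) 1 ×ˢ Set.Icc (0:ℝ) 1) (fun p : ℝ × ℝ => hD p.1 p.2) := by
  refine ⟨(convex_Icc 0 1).prod (convex_Icc 0 1), ?_⟩
  rintro ⟨x₁, x₂⟩ ⟨hx1, hx2⟩ ⟨y₁, y₂⟩ ⟨hy1, hy2⟩ a b ha hb' hab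
  obtain ⟨hx10, hx11⟩ := hx1
  obtain ⟨hx20, hx21⟩ := hx2
  obtain ⟨hy10, hy11⟩ := hy1
  obtain ⟨hy20, hy21⟩ := hy2
  simp only [Prod.smul_mk, Prod.mk_add_mk, smul_eq_mul]
  rw [hD_eq, hD_eq, hD_eq]
  have k1 := logsum (a * x₁) (b * y₁) (a * (x₁ + x₂)) (b * (y₁ + y₂))
    (by positivity) (by positivity)
    (mul_le_mul_of_nonneg_left (by linarith) ha)
    (mul_le_mul_of_nonneg_left (by linarith) hb')
  rw [Gsmul a x₁ (x₁ + x₂) ha hx10 (by linarith),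
    Gsmul b y₁ (y₁ + y₂) hb' hy10 (by linarith)] at k1
  have k2 := logsum (a * x₂) (b * y₂) (a * (x₁ + x₂)) (b * (y₁ + y₂))
    (by positivity) (by positivity)
    (mul_le_mul_of_nonneg_left (by linarith) ha)
    (mul_le_mul_of_nonneg_left (by linarith) hb')
  rw [Gsmul a x₂ (x₁ + x₂) ha hx20 (by linarith),
    Gsmul b y₂ (y₁ + y₂) hb' hy20 (by linarith)] at k2
  have k3 := logsum (a * (1 - x₁)) (b * (1 - y₁)) (a * (2 - x₁ - x₂)) (b * (2 - y₁ - y₂))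
    (by nlinarith) (by nlinarith)
    (mul_le_mul_of_nonneg_left (by linarith) ha)
    (mul_le_mul_of_nonneg_left (by linarith) hb')
  rw [Gsmul a (1 - x₁) (2 - x₁ - x₂) ha (by linarith) (by linarith),
    Gsmul b (1 - y₁) (2 - y₁ - y₂) hb' (by linarith) (by linarith)] at k3
  have k4 := logsum (a * (1 - x₂)) (b * (1 - y₂)) (a * (2 - x₁ - x₂)) (b * (2 - y₁ - y₂))
    (by nlinarith) (by nlinarith)
    (mul_le_mul_of_nonneg_left (by linarith) ha)
    (mul_le_mul_of_nonneg_left (by linarith) hb')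
  rw [Gsmul a (1 - x₂) (2 - x₁ - x₂) ha (by linarith) (by linarith),
    Gsmul b (1 - y₂) (2 - y₁ - y₂) hb' (by linarith) (by linarith)] at k4
  rw [show a * x₁ + b * y₁ + (a * x₂ + b * y₂) = a * (x₁ + x₂) + b * (y₁ + y₂) by ring,
    show (1 : ℝ) - (a * x₁ + b * y₁) = a * (1 - x₁) + b * (1 - y₁) by linear_combination -hab,
    show (2 : ℝ) - (a * x₁ + b * y₁) - (a * x₂ + b * y₂)
      = a * (2 - x₁ - x₂) + b * (2 - y₁ - y₂) by linear_combination -2 * hab,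
    show (1 : ℝ) - (a * x₂ + b * y₂) = a * (1 - x₂) + b * (1 - y₂) by linear_combination -hab]
  have hlog : a * (2 * Real.log 2) + b * (2 * Real.log 2) = 2 * Real.log 2 := by
    linear_combination (2 * Real.log 2) * hab
  nlinarith [k1, k2, k3, k4, hlog]
end

section
/- For every c ∈ [0,1] and y ∈ [0,2], h_D⁻¹(y | c) ≤ c + √y, where h_D⁻¹(y | c) := sup{x ∈ [0,1] : h_D(x,c) ≤ y}. -/
noncomputable def hDinv (y c : ℝ) : ℝ := sSup {x ∈ Set.Icc (0:ℝ) 1 | hD x c ≤ y}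

lemma hb_eq_binEntropy : hb = Real.binEntropy := by
  funext x
  simp [hb, Real.binEntropy, Real.log_inv]
  ring

lemma concave_aux : ConcaveOn ℝ (Set.Icc (0:ℝ) 1)
    (fun t => Real.binEntropy t + 2 * t ^ 2) := by
  apply concaveOn_of_hasDerivWithinAt2_nonpos (f' := fun t => Real.log (1 - t) - Real.log t + 4 * t)
    (f'' := fun t => -(1 - t)⁻¹ - t⁻¹ + 4) (convex_Icc 0 1)
  · exact (Real.binEntropy_continuous.add (by continuity)).continuousOn
  · intro x hx
    rw [interior_Icc] at hx
    have h0 : x ≠ 0 := ne_of_gt hx.1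
    have h1 : x ≠ 1 := ne_of_lt hx.2
    have h := (Real.hasDerivAt_binEntropy h0 h1).add
      ((hasDerivAt_pow 2 x).const_mul 2)
    refine HasDerivWithinAt.congr_deriv h.hasDerivWithinAt ?_
    push_cast
    ring
  · intro x hx
    rw [interior_Icc] at hx
    have h0 : x ≠ 0 := ne_of_gt hx.1
    have h1 : (1:ℝ) - x ≠ 0 := sub_ne_zero.mpr (ne_of_lt hx.2).symm
    have hlog1 : HasDerivAt (fun t : ℝ => Real.log (1 - t)) (-1 / (1 - x)) x :=
      HasDerivAt.log ((hasDerivAt_id x).const_sub 1) h1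
    have hlog2 : HasDerivAt Real.log x⁻¹ x := Real.hasDerivAt_log h0
    have h4 : HasDerivAt (fun t : ℝ => 4 * t) (4 * 1) x := (hasDerivAt_id x).const_mul 4
    have h := (hlog1.sub hlog2).add h4
    refine HasDerivWithinAt.congr_deriv h.hasDerivWithinAt ?_
    field_simp
  · intro x hx
    rw [interior_Icc] at hx
    have h0 : 0 < x := hx.1
    have h1 : 0 < 1 - x := by linarith [hx.2]
    have key : 4 * (x * (1 - x)) ≤ 1 := by nlinarith [sq_nonneg (2*x - 1)]
    have e1 : (1 - x)⁻¹ * (1 - x) = 1 := inv_mul_cancel₀ (ne_of_gt h1)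
    have e2 : x⁻¹ * x = 1 := inv_mul_cancel₀ (ne_of_gt h0)
    nlinarith [mul_pos (inv_pos.mpr h1) (inv_pos.mpr h0), mul_pos h0 h1]

lemma key_ineq (x c : ℝ) (hx : x ∈ Set.Icc (0:ℝ) 1) (hc : c ∈ Set.Icc (0:ℝ) 1) :
    (x - c) ^ 2 ≤ hD x c := by
  have h := concave_aux.2 hx hc (by norm_num : (0:ℝ) ≤ 1/2) (by norm_num : (0:ℝ) ≤ 1/2)
    (by norm_num)
  simp only [smul_eq_mul] at h
  have hm : (1/2 : ℝ) * x + (1/2 : ℝ) * c = (x + c) / 2 := by ring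
  rw [hm] at h
  simp only [hD, hb_eq_binEntropy]
  nlinarith [h]

theorem hDinv_le_add_sqrt (c y : ℝ) (hc : c ∈ Set.Icc (0:ℝ) 1)
    (hy : y ∈ Set.Icc (0:ℝ) 2) : hDinv y c ≤ c + Real.sqrt y := by
  apply Real.sSup_le
  · rintro x ⟨hx, hxy⟩
    have h1 : (x - c) ^ 2 ≤ y := le_trans (key_ineq x c hx hc) hxy
    have h2 : |x - c| ≤ Real.sqrt y := Real.abs_le_sqrt h1
    have := le_abs_self (x - c)
    linarith
  · have := Real.sqrt_nonneg y
    linarith [hc.1]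
end
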